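/- Let X ⊆ ℕ² be standardization-invariant. Let I = {i₁ < i₂ < ⋯ < i_k} ⊆ [n-1], set i₀ = 0, and let n ≥ max(I). Then d_X(I;n) = Σ over subsets {j₁ < ⋯ < j_r} ⊆ {1,…,k} of (−1)^{k−r} · C(n, i_{j_r}) · C(i_{j_r}, i_{j_{r−1}}) ⋯ C(i_{j_2}, i_{j_1}) · Π_{t=0}^{r} d_X(∅; i_{j_{t+1}} − i_{j_t}), where j₀ = 0, i_{j₀} = 0, and i_{j_{r+1}} = n (for r = 0 the empty product of binomials is 1 and the product term is d_X(∅;n)). -/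

import Mathlib

open Classical in
/-- The `X`-descent set of a word `w = w₁⋯w_n` (stored 0-indexed as a list), as a subset of
`[n-1] = {1, …, n-1}`: position `i` is an `X`-descent iff `(w_i, w_{i+1}) ∈ X`. -/
noncomputable def XDes (X : Set (ℕ × ℕ)) (w : List ℕ) : Finset ℕ :=
  (Finset.Icc 1 (w.length - 1)).filter (fun i => (w.getD (i - 1) 0, w.getD i 0) ∈ X)

/-- `dX X I S` is the number of permutations of the finite label set `S ⊆ ℕ` (written in
one-line notation as duplicate-free lists using exactly the labels of `S`) whose
`X`-descent set is exactly `I`. -/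
noncomputable def dX (X : Set (ℕ × ℕ)) (I : Finset ℕ) (S : Finset ℕ) : ℕ :=
  Nat.card {w : List ℕ // w.Nodup ∧ w.toFinset = S ∧ XDes X w = I}

/-- `dXn X I n = dX X I [n]` where `[n] = {1, …, n}`. -/
noncomputable def dXn (X : Set (ℕ × ℕ)) (I : Finset ℕ) (n : ℕ) : ℕ :=
  dX X I (Finset.Icc 1 n)

/-- The product of binomial coefficients `C(c₂,c₁)·C(c₃,c₂)⋯` along consecutive entries of a
list `[c₁, c₂, …]`. -/
def chainBinom (M : List ℕ) : ℕ :=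
  (List.zipWith (fun a b => Nat.choose b a) M M.tail).prod

/-- The list of consecutive differences `[c₂ − c₁, c₃ − c₂, …]` of a list `[c₁, c₂, …]`. -/
def gapList (M : List ℕ) : List ℕ :=
  List.zipWith (fun a b => b - a) M M.tail

/-!
A permutation of `[m]` whose `X`-descent set lies in `C`, where `c = max C`, is an arrangement of
a `c`-subset with `X`-descents in `C` followed by an `X`-descent-free arrangement of its complement;
the junction at `c` may or may not be a descent. By standardization invariance the number
`α(C; m)` of such permutations is therefore `C(m, c) · α(C ∖ {c}; c) · d(∅; m - c)`, and induction
on `max C` turns this into the chain of binomials times the `d(∅; ·)` of the gaps of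
`0 < C < m`. Since `α(C; m) = ∑_{J ⊆ C} d(J; m)`, Möbius inversion over the subsets of `I`
recovers `d(I; m)`.
-/

open Finset

section SortedChains

variable {α β : Type*}

lemma List.zipWith_cons_append_pair (f : α → α → β) (a b : α) :
    ∀ (x : α) (L : List α),
      List.zipWith f (x :: (L ++ [a, b])) (L ++ [a, b]) =
        List.zipWith f (x :: (L ++ [a])) (L ++ [a]) ++ [f a b]
  | _, [] => rfl
  | x, y :: L => by
    simp only [List.cons_append, List.zipWith_cons_cons,
      List.zipWith_cons_append_pair f a b y L]

lemma List.zipWith_tail_append_pair (f : α → α → β) (L : List α) (a b : α) :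
    List.zipWith f (L ++ [a, b]) (L ++ [a, b]).tail =
      List.zipWith f (L ++ [a]) (L ++ [a]).tail ++ [f a b] := by
  cases L with
  | nil => rfl
  | cons x L => exact List.zipWith_cons_append_pair f a b x L

lemma chainBinom_append_pair (L : List ℕ) (a b : ℕ) :
    chainBinom (L ++ [a, b]) = chainBinom (L ++ [a]) * b.choose a := by
  simp only [chainBinom, List.zipWith_tail_append_pair, List.prod_append, List.prod_singleton]

lemma gapList_append_pair (L : List ℕ) (a b : ℕ) :
    gapList (L ++ [a, b]) = gapList (L ++ [a]) ++ [b - a] :=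
  List.zipWith_tail_append_pair _ L a b

lemma Finset.sort_insert_of_forall_lt [LinearOrder α] {s : Finset α} {a : α}
    (h : ∀ x ∈ s, x < a) : (insert a s).sort (· ≤ ·) = s.sort (· ≤ ·) ++ [a] := by
  have hnodup : (s.sort (· ≤ ·) ++ [a]).Nodup :=
    List.nodup_append.2 ⟨s.sort_nodup _, List.nodup_singleton a, by
      simpa [mem_sort] using fun x hx => (h x hx).ne⟩
  have hsorted : (s.sort (· ≤ ·) ++ [a]).Pairwise (· ≤ ·) :=
    List.pairwise_append.2 ⟨s.pairwise_sort _, List.pairwise_singleton _ _, by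
      simpa [mem_sort] using fun x hx => (h x hx).le⟩
  have := (List.toFinset_sort (· ≤ ·) hnodup).2 hsorted
  rwa [List.toFinset_append, sort_toFinset, List.toFinset_cons, List.toFinset_nil,
    insert_empty_eq, union_comm, ← insert_eq] at this

end SortedChains

section MoebiusInversion

variable {α R : Type*} [DecidableEq α] [CommRing R]

lemma Finset.sum_filter_superset_neg_one_pow {I J : Finset α} (hJ : J ⊆ I) :
    ∑ C ∈ I.powerset with J ⊆ C, (-1 : R) ^ (#I - #C) = if J = I then 1 else 0 := by
  have hcompl : ∑ C ∈ I.powerset with J ⊆ C, (-1 : R) ^ (#I - #C) =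
      ∑ D ∈ (I \ J).powerset, (-1 : R) ^ #D := by
    refine sum_nbij' (I \ ·) (I \ ·) ?_ ?_ ?_ ?_ ?_
    · intro C hC
      simp only [mem_filter, mem_powerset] at hC ⊢
      exact sdiff_subset_sdiff subset_rfl hC.2
    · intro D hD
      simp only [mem_filter, mem_powerset] at hD ⊢
      exact ⟨sdiff_subset,
        subset_sdiff.2 ⟨hJ, (disjoint_of_subset_left hD sdiff_disjoint).symm⟩⟩
    · intro C hC
      exact sdiff_sdiff_eq_self (mem_powerset.1 (mem_filter.1 hC).1)
    · intro D hD
      exact sdiff_sdiff_eq_self ((mem_powerset.1 hD).trans sdiff_subset)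
    · intro C hC
      rw [card_sdiff_of_subset (mem_powerset.1 (mem_filter.1 hC).1)]
  have hsum := congrArg (Int.cast : ℤ → R) (sum_powerset_neg_one_pow_card (x := I \ J))
  push_cast at hsum
  rw [hcompl, hsum]
  exact if_congr (sdiff_eq_empty_iff_subset.trans ⟨hJ.antisymm, fun h => h ▸ subset_rfl⟩) rfl rfl

lemma Finset.sum_powerset_neg_one_pow_mul_sum_powerset (f : Finset α → R) (I : Finset α) :
    ∑ C ∈ I.powerset, (-1 : R) ^ (#I - #C) * ∑ J ∈ C.powerset, f J = f I := calc
  _ = ∑ C ∈ I.powerset, ∑ J ∈ C.powerset, (-1 : R) ^ (#I - #C) * f J := by simp_rw [mul_sum]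
  _ = ∑ J ∈ I.powerset, ∑ C ∈ I.powerset with J ⊆ C, (-1 : R) ^ (#I - #C) * f J :=
    sum_comm' fun C J => by
      simp only [mem_powerset, mem_filter]
      exact ⟨fun h => ⟨⟨h.1, h.2⟩, h.2.trans h.1⟩, fun h => h.1⟩
  _ = ∑ J ∈ I.powerset, if J = I then f J else 0 := sum_congr rfl fun J hJ => by
    rw [← sum_mul, sum_filter_superset_neg_one_pow (mem_powerset.1 hJ), ite_mul, one_mul,
      zero_mul]
  _ = f I := by simp

end MoebiusInversion

section ListsOfFinset

variable {α : Type*}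

def Finset.arrangements (S : Finset α) : Finset (List α) :=
  ⟨S.val.lists, Multiset.lists_nodup_finset S⟩

lemma Finset.mem_arrangements_iff_coe {S : Finset α} {w : List α} :
    w ∈ S.arrangements ↔ S.val = w :=
  Multiset.mem_lists_iff S.val w

lemma Finset.length_of_mem_arrangements {S : Finset α} {w : List α} (hw : w ∈ S.arrangements) :
    w.length = #S := by
  rw [card_def, mem_arrangements_iff_coe.1 hw, Multiset.coe_card]

variable [DecidableEq α]

lemma Finset.mem_arrangements {S : Finset α} {w : List α} :
    w ∈ S.arrangements ↔ w.Nodup ∧ w.toFinset = S := by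
  rw [mem_arrangements_iff_coe, ← val_inj, List.toFinset_val]
  constructor
  · intro h
    have hw : w.Nodup := by rw [← Multiset.coe_nodup, ← h]; exact S.nodup
    exact ⟨hw, by rw [hw.dedup, h]⟩
  · rintro ⟨hw, h⟩
    rw [← h, hw.dedup]

lemma Finset.append_mem_arrangements_iff {S T : Finset α} (hTS : T ⊆ S) {u v : List α} :
    u ++ v ∈ S.arrangements ∧ u.toFinset = T ↔
      u ∈ T.arrangements ∧ v ∈ (S \ T).arrangements := by
  simp only [mem_arrangements_iff_coe, sdiff_val]
  constructor
  · rintro ⟨hS, rfl⟩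
    have hu : u.Nodup := (List.nodup_append.1 (Multiset.coe_nodup.1 (hS ▸ S.nodup))).1
    rw [List.toFinset_val, hu.dedup, hS, ← Multiset.coe_add, add_tsub_cancel_left]
    exact ⟨rfl, rfl⟩
  · rintro ⟨hT, hST⟩
    have hu : u.Nodup := Multiset.coe_nodup.1 (hT ▸ T.nodup)
    refine ⟨?_, by rw [← val_inj, List.toFinset_val, hu.dedup, hT]⟩
    rw [← Multiset.coe_add, ← hT, ← hST, add_tsub_cancel_of_le (val_le_iff.2 hTS)]

lemma Finset.card_filter_arrangements_take_drop (S : Finset α) {c : ℕ} (hc : c ≤ #S)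
    (P Q : List α → Prop) [DecidablePred P] [DecidablePred Q] :
    #{w ∈ S.arrangements | P (w.take c) ∧ Q (w.drop c)} =
      ∑ T ∈ S.powersetCard c,
        #{u ∈ T.arrangements | P u} * #{v ∈ (S \ T).arrangements | Q v} := by
  rw [card_eq_sum_card_fiberwise (f := fun w => (w.take c).toFinset) (t := S.powersetCard c)]
  · refine sum_congr rfl fun T hT => ?_
    obtain ⟨hTS, hTc⟩ := mem_powersetCard.1 hT
    rw [← card_product, ← filter_product]
    refine card_nbij' (fun w => (w.take c, w.drop c)) (fun p => p.1 ++ p.2) ?_ ?_ ?_ ?_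
    · intro w hw
      simp only [mem_coe, mem_filter, mem_product] at hw ⊢
      rw [← append_mem_arrangements_iff hTS, List.take_append_drop]
      exact ⟨⟨hw.1.1, hw.2⟩, hw.1.2⟩
    · rintro ⟨u, v⟩ hp
      simp only [mem_coe, mem_filter, mem_product] at hp ⊢
      have hu : u.length = c := by rw [length_of_mem_arrangements hp.1.1, hTc]
      have := (append_mem_arrangements_iff hTS).2 hp.1
      rw [List.take_left' hu, List.drop_left' hu]
      exact ⟨⟨this.1, hp.2⟩, this.2⟩
    · intro w _
      exact List.take_append_drop c w
    · rintro ⟨u, v⟩ hp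
      simp only [mem_coe, mem_filter, mem_product] at hp
      have hu : u.length = c := by rw [length_of_mem_arrangements hp.1.1, hTc]
      simp only [List.take_left' hu, List.drop_left' hu]
  · intro w hw
    obtain ⟨hnodup, rfl⟩ := mem_arrangements.1 (mem_filter.1 hw).1
    refine mem_powersetCard.2 ⟨fun x hx => ?_, ?_⟩
    · simpa using List.mem_of_mem_take (List.mem_toFinset.1 hx)
    · rw [List.toFinset_card_of_nodup ((List.take_sublist c w).nodup hnodup), List.length_take,
        ← List.toFinset_card_of_nodup hnodup]
      omega

end ListsOfFinset

section XDescents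

variable {X : Set (ℕ × ℕ)}

lemma mem_XDes {w : List ℕ} {i : ℕ} :
    i ∈ XDes X w ↔ 1 ≤ i ∧ i < w.length ∧ (w.getD (i - 1) 0, w.getD i 0) ∈ X := by
  simp only [XDes, mem_filter, mem_Icc, and_assoc]
  constructor <;> rintro ⟨h₁, h₂, h₃⟩ <;> exact ⟨h₁, by omega, h₃⟩

lemma mem_XDes_append_of_lt {u v : List ℕ} {i : ℕ} (hi : i < u.length) :
    i ∈ XDes X (u ++ v) ↔ i ∈ XDes X u := by
  simp only [mem_XDes, List.getD_append u v 0 i hi, List.getD_append u v 0 (i - 1) (by omega),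
    List.length_append]
  constructor <;> rintro ⟨h₁, -, h₃⟩ <;> exact ⟨h₁, by omega, h₃⟩

lemma add_mem_XDes_append {u v : List ℕ} {j : ℕ} (hj : 1 ≤ j) :
    u.length + j ∈ XDes X (u ++ v) ↔ j ∈ XDes X v := by
  simp only [mem_XDes, List.getD_append_right u v 0 (u.length + j) (by omega),
    List.getD_append_right u v 0 (u.length + j - 1) (by omega), List.length_append]
  rw [show u.length + j - 1 - u.length = j - 1 by omega, Nat.add_sub_cancel_left]
  constructor <;> rintro ⟨-, h₂, h₃⟩ <;> exact ⟨by omega, by omega, h₃⟩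

lemma XDes_append_subset_iff {u v : List ℕ} {C : Finset ℕ} (hC : C ⊆ Icc 1 u.length)
    (hu : u.length ∈ C) : XDes X (u ++ v) ⊆ C ↔ XDes X u ⊆ C ∧ XDes X v = ∅ := by
  refine ⟨fun h => ⟨fun i hi => ?_, eq_empty_of_forall_notMem fun j hj => ?_⟩, ?_⟩
  · exact h ((mem_XDes_append_of_lt (mem_XDes.1 hi).2.1).2 hi)
  · have hj₁ := (mem_XDes.1 hj).1
    have := mem_Icc.1 (hC (h ((add_mem_XDes_append hj₁).2 hj)))
    omega
  · rintro ⟨hsub, hempty⟩ i hi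
    rcases lt_trichotomy i u.length with hlt | rfl | hgt
    · exact hsub ((mem_XDes_append_of_lt hlt).1 hi)
    · exact hu
    · obtain ⟨j, rfl⟩ := Nat.exists_eq_add_of_le hgt.le
      simpa [hempty] using (add_mem_XDes_append (j := j) (by omega)).1 hi

end XDescents

section Counting

variable (X : Set (ℕ × ℕ))

lemma dX_eq_card (I S : Finset ℕ) : dX X I S = #{w ∈ S.arrangements | XDes X w = I} := by
  rw [dX, ← Nat.card_eq_finsetCard]
  congr
  ext w
  simp [mem_arrangements, and_assoc]

/-- Stanley's `α`, with `X`-descents in place of descents. -/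
noncomputable def alphaX (C S : Finset ℕ) : ℕ := #{w ∈ S.arrangements | XDes X w ⊆ C}

lemma alphaX_eq_sum_dX (C S : Finset ℕ) : alphaX X C S = ∑ J ∈ C.powerset, dX X J S := by
  rw [alphaX, card_eq_sum_card_fiberwise (f := XDes X)
    fun w hw => mem_powerset.2 (mem_filter.1 hw).2]
  refine sum_congr rfl fun J hJ => ?_
  rw [dX_eq_card, filter_filter]
  exact congrArg card <| filter_congr fun w _ => ⟨And.right, fun h => ⟨h ▸ mem_powerset.1 hJ, h⟩⟩

lemma alphaX_erase_of_card_le {C S : Finset ℕ} {c : ℕ} (h : #S ≤ c) :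
    alphaX X (C.erase c) S = alphaX X C S := by
  refine congrArg card (filter_congr fun w hw => ⟨fun hsub => hsub.trans (erase_subset c C), ?_⟩)
  intro hsub i hi
  have := (mem_XDes.1 hi).2.1
  rw [length_of_mem_arrangements hw] at this
  exact mem_erase.2 ⟨by omega, hsub hi⟩

end Counting

def StandardizationInvariant (X : Set (ℕ × ℕ)) : Prop :=
  ∀ (S : Finset ℕ) (I : Finset ℕ), dX X I S = dXn X I S.card

section Standardization

variable {X : Set (ℕ × ℕ)}

lemma StandardizationInvariant.alphaX_eq (hX : StandardizationInvariant X) (C S : Finset ℕ) :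
    alphaX X C S = alphaX X C (Icc 1 #S) := by
  simp only [alphaX_eq_sum_dX, hX S, hX (Icc 1 #S), Nat.card_Icc, Nat.add_sub_cancel]

lemma StandardizationInvariant.alphaX_Icc_eq_choose_mul (hX : StandardizationInvariant X)
    {C : Finset ℕ} {c m : ℕ} (hcm : c ≤ m) (hC : C ⊆ Icc 1 c) (hc : c ∈ C) :
    alphaX X C (Icc 1 m) = m.choose c * alphaX X (C.erase c) (Icc 1 c) * dXn X ∅ (m - c) := by
  have hsplit : alphaX X C (Icc 1 m) =
      #{w ∈ (Icc 1 m).arrangements | XDes X (w.take c) ⊆ C ∧ XDes X (w.drop c) = ∅} := by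
    refine congrArg card (filter_congr fun w hw => ?_)
    have hlen : (w.take c).length = c := by
      rw [List.length_take, length_of_mem_arrangements hw, Nat.card_Icc]
      omega
    rw [← XDes_append_subset_iff (by rwa [hlen]) (by rwa [hlen]), List.take_append_drop]
  have hblock : ∀ T ∈ (Icc 1 m).powersetCard c,
      #{u ∈ T.arrangements | XDes X u ⊆ C} *
        #{v ∈ (Icc 1 m \ T).arrangements | XDes X v = ∅} =
          alphaX X (C.erase c) (Icc 1 c) * dXn X ∅ (m - c) := by
    intro T hT
    obtain ⟨hTS, hTc⟩ := mem_powersetCard.1 hT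
    rw [← alphaX, ← dX_eq_card, hX.alphaX_eq, hX, card_sdiff_of_subset hTS, hTc, Nat.card_Icc,
      Nat.add_sub_cancel, ← alphaX_erase_of_card_le X (c := c) (by simp)]
  rw [hsplit, card_filter_arrangements_take_drop _ (by simpa using hcm)
    (fun u => XDes X u ⊆ C) (fun v => XDes X v = ∅), sum_congr rfl hblock,
    sum_const, card_powersetCard, Nat.card_Icc, Nat.add_sub_cancel, smul_eq_mul, mul_assoc]

lemma StandardizationInvariant.alphaX_Icc_eq_chainBinom_mul (hX : StandardizationInvariant X)
    (C : Finset ℕ) {m : ℕ} (hC : C ⊆ Icc 1 m) :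
    alphaX X C (Icc 1 m) = chainBinom (C.sort (· ≤ ·) ++ [m]) *
      ((gapList (0 :: (C.sort (· ≤ ·) ++ [m]))).map (dXn X ∅)).prod := by
  induction C using Finset.induction_on_max generalizing m with
  | empty => simp [alphaX_eq_sum_dX, chainBinom, gapList, dXn]
  | insert c s hlt ih =>
    have hc := mem_Icc.1 (hC (mem_insert_self c s))
    have hs : s ⊆ Icc 1 c := fun x hx =>
      mem_Icc.2 ⟨(mem_Icc.1 (hC (mem_insert_of_mem hx))).1, (hlt x hx).le⟩
    have hcs : c ∉ s := fun h => lt_irrefl c (hlt c h)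
    rw [hX.alphaX_Icc_eq_choose_mul hc.2 (insert_subset (mem_Icc.2 ⟨hc.1, le_rfl⟩) hs)
      (mem_insert_self c s), erase_insert hcs, ih hs, sort_insert_of_forall_lt hlt,
      List.append_assoc, List.singleton_append, chainBinom_append_pair, ← List.cons_append,
      ← List.cons_append, gapList_append_pair, List.map_append, List.prod_append]
    simp only [List.cons_append, List.map_singleton, List.prod_singleton]
    ring

end Standardization

theorem stmt3_general (X : Set (ℕ × ℕ))
    (hstd : ∀ (S : Finset ℕ) (I : Finset ℕ), dX X I S = dXn X I S.card)
    (n : ℕ) (I : Finset ℕ) (hI : I ⊆ Finset.Icc 1 (n - 1)) :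
    (dXn X I n : ℤ) =
      ∑ C ∈ I.powerset,
        (-1 : ℤ) ^ (I.card - C.card) *
          (chainBinom (C.sort (· ≤ ·) ++ [n]) : ℤ) *
          ((gapList (0 :: (C.sort (· ≤ ·) ++ [n]))).map (fun g => (dXn X ∅ g : ℤ))).prod := by
  have hX : StandardizationInvariant X := hstd
  rw [dXn, ← sum_powerset_neg_one_pow_mul_sum_powerset (fun J => (dX X J (Icc 1 n) : ℤ))]
  refine sum_congr rfl fun C hC => ?_
  have hCn : C ⊆ Icc 1 n :=
    (mem_powerset.1 hC).trans (hI.trans (Icc_subset_Icc_right (n.sub_le 1)))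
  rw [← Nat.cast_sum, ← alphaX_eq_sum_dX, hX.alphaX_Icc_eq_chainBinom_mul C hCn]
  push_cast [List.map_map, Function.comp_def]
  ring

/-- inclusion–exclusion formula. Suppose `X` is standardization-invariant,
`I = {i₁ < ⋯ < i_k} ⊆ [n-1]`. Then `d_X(I;n)` equals the sum over subsets
`{j₁ < ⋯ < j_r} ⊆ {1,…,k}` (equivalently, over subsets `C ⊆ I`, with
`C = {i_{j₁} < ⋯ < i_{j_r}}`) of
`(−1)^{k−r} C(n, i_{j_r}) C(i_{j_r}, i_{j_{r−1}}) ⋯ C(i_{j_2}, i_{j_1}) ·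
Π_{t=0}^{r} d_X(∅; i_{j_{t+1}} − i_{j_t})`, with conventions `i_{j_0} = 0`, `i_{j_{r+1}} = n`.
Here the chain of binomials is `chainBinom` of the sorted list of `C` with `n` appended, and
the gaps product is taken along `0 :: (sorted C ++ [n])`. -/
theorem stmt3 (X : Set (ℕ × ℕ))
    (hstd : ∀ (S : Finset ℕ) (I : Finset ℕ), dX X I S = dXn X I S.card)
    (n : ℕ) (hn : 1 ≤ n) (I : Finset ℕ) (hI : I ⊆ Finset.Icc 1 (n - 1)) :
    (dXn X I n : ℤ) =
      ∑ C ∈ I.powerset,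
        (-1 : ℤ) ^ (I.card - C.card) *
          (chainBinom (C.sort (· ≤ ·) ++ [n]) : ℤ) *
          ((gapList (0 :: (C.sort (· ≤ ·) ++ [n]))).map (fun g => (dXn X ∅ g : ℤ))).prod :=
  stmt3_general X hstd n I hI
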